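/- For every integer i ≥ 0, the left A-linear map Aw → A given by right multiplication by d*(c*)ⁱ (i.e., a ↦ a·d*(c*)ⁱ) is injective and its image is the left ideal A·d*(c*)ⁱ; hence Aw and A·d*(c*)ⁱ are isomorphic left A-modules. -/
import Mathlib


noncomputable section

/-- The relation `X * Y = 1` defining the Jacobson algebra. -/
def JacRel (K : Type) [Field K] : FreeAlgebra K (Fin 2) → FreeAlgebra K (Fin 2) → Prop :=
  fun a b => a = FreeAlgebra.ι K (0 : Fin 2) * FreeAlgebra.ι K (1 : Fin 2) ∧ b = 1

/-- The Jacobson algebra `K⟨X, Y ∣ XY = 1⟩`. -/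
abbrev Jac (K : Type) [Field K] := RingQuot (JacRel K)

variable (K : Type) [Field K]

/-- The generator `X`. -/
def Xg : Jac K := RingQuot.mkAlgHom K (JacRel K) (FreeAlgebra.ι K 0)
/-- The generator `Y`. -/
def Yg : Jac K := RingQuot.mkAlgHom K (JacRel K) (FreeAlgebra.ι K 1)

/-- `w = 1 - YX`. -/
def wE : Jac K := 1 - Yg K * Xg K
/-- `c* = YX²`. -/
def csE : Jac K := Yg K * Xg K ^ 2
/-- `d* = X - YX²`. -/
def dsE : Jac K := Xg K - Yg K * Xg K ^ 2

lemma hXY : Xg K * Yg K = 1 := by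
  have h : JacRel K (FreeAlgebra.ι K 0 * FreeAlgebra.ι K 1) 1 := ⟨rfl, rfl⟩
  have := RingQuot.mkAlgHom_rel K h
  simpa [Xg, Yg, map_mul, map_one] using this

lemma hwY : wE K * Yg K = 0 := by
  unfold wE
  rw [sub_mul, one_mul, mul_assoc, hXY, mul_one, sub_self]

lemma hww : wE K * wE K = wE K := by
  nth_rewrite 2 [show wE K = 1 - Yg K * Xg K from rfl]
  rw [mul_sub, mul_one, ← mul_assoc, hwY, zero_mul, sub_zero]

lemma hds : dsE K = wE K * Xg K := by
  unfold dsE wE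
  rw [sub_mul, one_mul, sq, mul_assoc]

lemma hXc : Xg K * csE K = Xg K ^ 2 := by
  unfold csE
  rw [← mul_assoc, hXY, one_mul]

lemma hXci (i : ℕ) : Xg K * csE K ^ i = Xg K ^ (i + 1) := by
  induction i with
  | zero => simp
  | succ n ih =>
    rw [pow_succ, ← mul_assoc, ih, pow_succ _ n, mul_assoc, hXc, ← pow_add]

lemma hm (i : ℕ) : dsE K * csE K ^ i = wE K * Xg K ^ (i + 1) := by
  rw [hds, mul_assoc, hXci]

lemma hXYpow (n : ℕ) : Xg K ^ n * Yg K ^ n = 1 := by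
  induction n with
  | zero => simp
  | succ n ih =>
    rw [pow_succ, pow_succ']
    calc Xg K ^ n * Xg K * (Yg K * Yg K ^ n)
        = Xg K ^ n * (Xg K * Yg K) * Yg K ^ n := by rw [mul_assoc, mul_assoc, mul_assoc]
      _ = 1 := by rw [hXY, mul_one, ih]

lemma hmY (i : ℕ) : (dsE K * csE K ^ i) * Yg K ^ (i + 1) = wE K := by
  rw [hm, mul_assoc, hXYpow, mul_one]

lemma hwm (i : ℕ) : wE K * (dsE K * csE K ^ i) = dsE K * csE K ^ i := by
  rw [hm, ← mul_assoc, hww]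

/-- For every `i ≥ 0`, right multiplication by `d*(c*)ⁱ` is an injective left-`A`-linear map
on `Aw` with image `A·d*(c*)ⁱ`; hence `Aw ≅ A·d*(c*)ⁱ` as left `A`-modules. -/
theorem stmt7 (i : ℕ) :
    (∀ a ∈ Submodule.span (Jac K) {wE K}, ∀ b ∈ Submodule.span (Jac K) {wE K},
        a * (dsE K * csE K ^ i) = b * (dsE K * csE K ^ i) → a = b) ∧
    (fun a : Jac K => a * (dsE K * csE K ^ i)) '' (Submodule.span (Jac K) {wE K} : Set (Jac K)) =
      (Submodule.span (Jac K) {dsE K * csE K ^ i} : Set (Jac K)) ∧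
    Nonempty ((Submodule.span (Jac K) {wE K}) ≃ₗ[Jac K]
      (Submodule.span (Jac K) {dsE K * csE K ^ i})) := by
  have Hwm := hwm K i
  have HmY := hmY K i
  have key : ∀ a ∈ Submodule.span (Jac K) {wE K},
      a * (dsE K * csE K ^ i) * Yg K ^ (i + 1) = a := by
    intro a ha
    obtain ⟨r, hr⟩ := Submodule.mem_span_singleton.mp ha
    rw [← hr, smul_eq_mul, mul_assoc, HmY, mul_assoc, hww K]
  have P1 : ∀ a ∈ Submodule.span (Jac K) {wE K}, ∀ b ∈ Submodule.span (Jac K) {wE K},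
      a * (dsE K * csE K ^ i) = b * (dsE K * csE K ^ i) → a = b := by
    intro a ha b hb h
    have h2 : a * (dsE K * csE K ^ i) * Yg K ^ (i + 1)
        = b * (dsE K * csE K ^ i) * Yg K ^ (i + 1) := by rw [h]
    rwa [key a ha, key b hb] at h2
  have memf : ∀ a ∈ Submodule.span (Jac K) {wE K},
      a * (dsE K * csE K ^ i) ∈ Submodule.span (Jac K) {dsE K * csE K ^ i} := by
    intro a ha
    obtain ⟨r, hr⟩ := Submodule.mem_span_singleton.mp ha
    refine Submodule.mem_span_singleton.mpr ⟨r, ?_⟩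
    rw [smul_eq_mul] at hr ⊢
    rw [← hr, mul_assoc, Hwm]
  have surjf : ∀ b ∈ Submodule.span (Jac K) {dsE K * csE K ^ i},
      ∃ a ∈ Submodule.span (Jac K) {wE K}, a * (dsE K * csE K ^ i) = b := by
    intro b hb
    obtain ⟨r, hr⟩ := Submodule.mem_span_singleton.mp hb
    refine ⟨r * wE K, Submodule.mem_span_singleton.mpr ⟨r, by rw [smul_eq_mul]⟩, ?_⟩
    rw [smul_eq_mul] at hr
    rw [mul_assoc, Hwm, hr]
  have P2 : (fun a : Jac K => a * (dsE K * csE K ^ i)) ''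
        (Submodule.span (Jac K) {wE K} : Set (Jac K)) =
      (Submodule.span (Jac K) {dsE K * csE K ^ i} : Set (Jac K)) := by
    ext x
    constructor
    · rintro ⟨a, ha, rfl⟩
      exact memf a ha
    · intro hx
      obtain ⟨a, ha, hax⟩ := surjf x hx
      exact ⟨a, ha, hax⟩
  refine ⟨P1, P2, ?_⟩
  let f : (Submodule.span (Jac K) {wE K}) →ₗ[Jac K]
      (Submodule.span (Jac K) {dsE K * csE K ^ i}) :=
    { toFun := fun a => ⟨a.1 * (dsE K * csE K ^ i), memf a.1 a.2⟩
      map_add' := fun a b => Subtype.ext (add_mul _ _ _)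
      map_smul' := fun r a => Subtype.ext (by simp [smul_eq_mul, mul_assoc]) }
  have hinj : Function.Injective f := by
    intro a b h
    exact Subtype.ext (P1 a.1 a.2 b.1 b.2 (congrArg Subtype.val h))
  have hsurj : Function.Surjective f := by
    intro b
    obtain ⟨a, ha, hab⟩ := surjf b.1 b.2
    exact ⟨⟨a, ha⟩, Subtype.ext hab⟩
  exact ⟨LinearEquiv.ofBijective f ⟨hinj, hsurj⟩⟩
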